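/- (Theorem 3: FDR control of the oracle S-Way GBH) Let S ≥ 2 classification criteria each partition {1,…,N}: classification s partitions {1,…,N} into nonempty groups indexed by g_s = 1,…,M_s, and g_s(i) denotes the group of index i under classification s. Let π^0_{g_s} be the proportion of true nulls in group g_s and π^0 = |I^0|/N, and assume 0 < π^0 < 1 and 0 < π^0_{g_s} < 1 for every group of every classification. Define w_{g_s} = π^0_{g_s}·(1−π^0)/(1−π^0_{g_s}) and W_i by 1/W_i = (1/S)·Σ_{s=1}^S 1/w_{g_s(i)}. Under Assumptions 1 and 2, the level-α weighted BH procedure applied to the weighted p-values W_i·P_i has FDR ≤ α. -/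

import Mathlib

open MeasureTheory ProbabilityTheory Finset

/-- Number of rejections of the (weighted) BH step-up procedure at level `α`,
applied to the (weighted) p-values `Q`: the largest `j ≤ N` such that at least `j`
of the values `Q i` are `≤ j*α/N` (this is `0`, i.e. no rejections, when no such
`j ≥ 1` exists). -/
noncomputable def bhNumRejections (N : ℕ) (α : ℝ) (Q : Fin N → ℝ) : ℕ :=
  ((Finset.range (N + 1)).filter
      (fun j : ℕ => j ≤ (Finset.univ.filter (fun i : Fin N => Q i ≤ (j : ℝ) * α / N)).card)).sup id

/-- The set of indices rejected by the level-`α` BH procedure applied to `Q`. -/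
noncomputable def bhRejected (N : ℕ) (α : ℝ) (Q : Fin N → ℝ) : Finset (Fin N) :=
  Finset.univ.filter (fun i => Q i ≤ (bhNumRejections N α Q : ℝ) * α / N)

/-- False discovery proportion `V / max(R,1)` of the level-`α` BH procedure. -/
noncomputable def FDP (N : ℕ) (α : ℝ) (I0 : Finset (Fin N)) (Q : Fin N → ℝ) : ℝ :=
  ((bhRejected N α Q ∩ I0).card : ℝ) / max ((bhRejected N α Q).card : ℝ) 1

/-- False discovery rate `E[V / max(R,1)]` of the level-`α` BH procedure applied to
the (random, possibly weighted) p-values `Q ω`. -/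
noncomputable def FDR {Ω : Type*} [MeasurableSpace Ω] (μ : Measure Ω)
    (N : ℕ) (α : ℝ) (I0 : Finset (Fin N)) (Q : Ω → Fin N → ℝ) : ℝ :=
  ∫ ω, FDP N α I0 (Q ω) ∂μ

/-- Assumption 1: each null p-value is Uniform(0,1) (stated via its cdf). -/
def UniformNulls {Ω : Type*} [MeasurableSpace Ω] (μ : Measure Ω)
    {N : ℕ} (P : Ω → Fin N → ℝ) (I0 : Finset (Fin N)) : Prop :=
  ∀ i ∈ I0, ∀ x ∈ Set.Icc (0 : ℝ) 1, μ {ω | P ω i ≤ x} = ENNReal.ofReal x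

/-- Assumption 2: the p-values are PRDS on the subset of null p-values. -/
def PRDSNulls {Ω : Type*} [MeasurableSpace Ω] (μ : Measure Ω)
    {N : ℕ} (P : Ω → Fin N → ℝ) (I0 : Finset (Fin N)) : Prop :=
  ∀ i ∈ I0, ∀ φ : (Fin N → ℝ) → ℝ, Measurable φ → (∃ C, ∀ p, |φ p| ≤ C) →
    (∀ p q : Fin N → ℝ, (∀ j, p j ≤ q j) → φ p ≤ φ q) →
    ∀ x y : ℝ, 0 < x → x ≤ y → y ≤ 1 →
      (∫ ω in {ω | P ω i ≤ x}, φ (P ω) ∂μ) / (μ {ω | P ω i ≤ x}).toReal ≤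
        (∫ ω in {ω | P ω i ≤ y}, φ (P ω) ∂μ) / (μ {ω | P ω i ≤ y}).toReal

lemma bh_le_N (N : ℕ) (α : ℝ) (Q : Fin N → ℝ) : bhNumRejections N α Q ≤ N := by
  apply Finset.sup_le
  intro j hj
  simp only [Finset.mem_filter, Finset.mem_range, id] at hj ⊢
  omega

lemma bh_mem (N : ℕ) (α : ℝ) (Q : Fin N → ℝ) :
    bhNumRejections N α Q ≤
      (Finset.univ.filter (fun i : Fin N => Q i ≤ (bhNumRejections N α Q : ℝ) * α / N)).card := by
  classical
  set s := ((Finset.range (N + 1)).filter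
      (fun j : ℕ => j ≤ (Finset.univ.filter (fun i : Fin N => Q i ≤ (j : ℝ) * α / N)).card)) with hs
  have hne : s.Nonempty := ⟨0, by simp [hs]⟩
  obtain ⟨b, hb, hbe⟩ := Finset.exists_mem_eq_sup s hne id
  rw [bhNumRejections, ← hs, hbe]
  simp only [hs, Finset.mem_filter] at hb
  exact hb.2

lemma bh_ge (N : ℕ) (α : ℝ) (Q : Fin N → ℝ) (c : ℕ) (hc : c ≤ N)
    (h : c ≤ (Finset.univ.filter (fun i : Fin N => Q i ≤ (c : ℝ) * α / N)).card) :
    c ≤ bhNumRejections N α Q := by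
  have := Finset.le_sup (f := id) (b := c)
    (s := ((Finset.range (N + 1)).filter
      (fun j : ℕ => j ≤ (Finset.univ.filter (fun i : Fin N => Q i ≤ (j : ℝ) * α / N)).card)))
    (by simp only [Finset.mem_filter, Finset.mem_range]; exact ⟨by omega, h⟩)
  exact this

lemma bh_card (N : ℕ) (α : ℝ) (hα : 0 ≤ α) (Q : Fin N → ℝ) :
    (bhRejected N α Q).card = bhNumRejections N α Q := by
  set R := bhNumRejections N α Q with hR
  have h1 : R ≤ (bhRejected N α Q).card := bh_mem N α Q
  have h2 : (bhRejected N α Q).card ≤ R := by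
    have hcN : (bhRejected N α Q).card ≤ N := by
      refine le_trans (Finset.card_le_card (Finset.filter_subset _ _)) (by simp)
    apply bh_ge N α Q _ hcN
    refine le_trans (le_refl _) (Finset.card_le_card ?_)
    intro i hi
    rw [bhRejected, Finset.mem_filter] at hi; rw [Finset.mem_filter]
    refine ⟨hi.1, hi.2.trans ?_⟩
    have hcast : (R : ℝ) ≤ ((bhRejected N α Q).card : ℝ) := by exact_mod_cast h1
    gcongr
  omega

lemma bh_antitone (N : ℕ) (α : ℝ) (p q : Fin N → ℝ) (h : ∀ i, p i ≤ q i) :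
    bhNumRejections N α q ≤ bhNumRejections N α p := by
  apply Finset.sup_le
  intro j hj
  simp only [Finset.mem_filter, Finset.mem_range] at hj
  apply bh_ge N α p j (by omega)
  refine hj.2.trans (Finset.card_le_card ?_)
  intro i hi
  simp only [Finset.mem_filter] at hi ⊢
  exact ⟨hi.1, (h i).trans hi.2⟩


lemma bh_eq_sup_ite (N : ℕ) (α : ℝ) (Q : Fin N → ℝ) :
    bhNumRejections N α Q = (Finset.range (N + 1)).sup
      (fun j => if j ≤ (Finset.univ.filter (fun i : Fin N => Q i ≤ (j : ℝ) * α / N)).card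
        then j else 0) := by
  classical
  apply le_antisymm
  · apply Finset.sup_le
    intro j hj
    simp only [Finset.mem_filter] at hj
    refine le_trans ?_ (Finset.le_sup (f := fun j => if j ≤ _ then j else 0) hj.1)
    simp [hj.2]
  · apply Finset.sup_le
    intro j hj
    split_ifs with h
    · exact Finset.le_sup (f := id) (by simp only [Finset.mem_filter]; exact ⟨hj, h⟩)
    · exact Nat.zero_le _

lemma meas_card_filter (N : ℕ) (c : ℝ) :
    Measurable fun q : Fin N → ℝ => (Finset.univ.filter (fun i : Fin N => q i ≤ c)).card := by
  classical
  have : (fun q : Fin N → ℝ => (Finset.univ.filter (fun i : Fin N => q i ≤ c)).card)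
      = fun q => ∑ i : Fin N, if q i ≤ c then 1 else 0 := by
    funext q; rw [Finset.card_filter]
  rw [this]
  exact Finset.measurable_sum _ (fun i _ =>
    Measurable.ite (measurableSet_le (measurable_pi_apply i) measurable_const)
      measurable_const measurable_const)

lemma meas_finset_sup {X : Type*} [MeasurableSpace X] (s : Finset ℕ) (f : ℕ → X → ℕ)
    (hf : ∀ j, Measurable (f j)) : Measurable fun x => s.sup (fun j => f j x) := by
  classical
  induction s using Finset.induction with
  | empty => simp only [Finset.sup_empty]; exact measurable_const
  | insert a s h ih =>
      simp only [Finset.sup_insert]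
      exact Measurable.sup (hf _) ih

lemma meas_bh (N : ℕ) (α : ℝ) : Measurable fun q : Fin N → ℝ => bhNumRejections N α q := by
  classical
  have : (fun q : Fin N → ℝ => bhNumRejections N α q) = fun q => (Finset.range (N + 1)).sup
      (fun j => if j ≤ (Finset.univ.filter (fun i : Fin N => q i ≤ (j : ℝ) * α / N)).card
        then j else 0) := by
    funext q; exact bh_eq_sup_ite N α q
  rw [this]
  apply meas_finset_sup
  intro j
  apply Measurable.ite ?_ measurable_const measurable_const
  exact measurableSet_le measurable_const (meas_card_filter N _)



lemma abel_bound (F : ℕ → ℝ → ℝ) (q : ℝ) (hq : 0 < q)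
    (hF0 : ∀ k x, 0 ≤ F k x)
    (hratio : ∀ k x y, 0 < x → x ≤ y → y ≤ 1 → F k x / x ≤ F k y / y)
    (m : ℕ) (hm : 1 ≤ m) (hmq : (m : ℝ) * q ≤ 1) :
    ∑ k ∈ Finset.Icc 1 m, (1 / (k : ℝ)) * (F k (k * q) - F (k - 1) (k * q)) ≤
      (1 / (m : ℝ)) * F m ((m : ℝ) * q) := by
  induction m, hm using Nat.le_induction with
  | base =>
      simp only [Finset.Icc_self, Finset.sum_singleton]
      have := hF0 0 ((1 : ℕ) * q)
      push_cast
      nlinarith [hF0 0 (1 * q)]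
  | succ m hm ih =>
      have hmq' : (m : ℝ) * q ≤ 1 := by
        push_cast at hmq
        nlinarith
      have hsum := ih hmq'
      rw [Finset.sum_Icc_succ_top (by omega : 1 ≤ m + 1)]
      have key : (1 / (m : ℝ)) * F m ((m : ℝ) * q) ≤
          (1 / ((m : ℝ) + 1)) * F m (((m : ℝ) + 1) * q) := by
        have hm0 : (0:ℝ) < m := by exact_mod_cast hm
        have hx : (0:ℝ) < (m:ℝ) * q := by positivity
        have hxy : (m:ℝ) * q ≤ ((m:ℝ)+1) * q := by nlinarith
        have hy1 : ((m:ℝ)+1) * q ≤ 1 := by push_cast at hmq; linarith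
        have := hratio m ((m:ℝ)*q) (((m:ℝ)+1)*q) hx hxy hy1
        rw [div_le_div_iff₀ hx (by positivity)] at this
        rw [div_mul_eq_mul_div, div_mul_eq_mul_div, one_mul, one_mul,
          div_le_div_iff₀ hm0 (by positivity)]
        nlinarith
      have hcast : ((m + 1 : ℕ) : ℝ) = (m : ℝ) + 1 := by push_cast; ring
      have hsub : (m + 1 - 1 : ℕ) = m := by omega
      rw [hsub, hcast]
      linarith [hsum, key]



lemma fiber_sum {N : ℕ} (t : Finset (Fin N)) (cs : Fin N → Finset (Fin N))
    (hmem : ∀ i, i ∈ cs i) (hpart : ∀ i j : Fin N, j ∈ cs i → cs j = cs i)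
    (f : Finset (Fin N) → ℝ) :
    ∑ i ∈ t, f (cs i) = ∑ g ∈ Finset.univ.image cs, ((g ∩ t).card : ℝ) * f g := by
  classical
  rw [← Finset.sum_fiberwise_of_maps_to (g := cs) (t := Finset.univ.image cs)
    (fun i _ => Finset.mem_image_of_mem cs (Finset.mem_univ i)) (fun i => f (cs i))]
  apply Finset.sum_congr rfl
  intro g hg
  obtain ⟨j, _, rfl⟩ := Finset.mem_image.mp hg
  have hfib : t.filter (fun i => cs i = cs j) = cs j ∩ t := by
    ext i
    simp only [Finset.mem_filter, Finset.mem_inter]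
    constructor
    · rintro ⟨hit, hcs⟩; exact ⟨hcs ▸ hmem i, hit⟩
    · rintro ⟨hig, hit⟩; exact ⟨hit, hpart j i hig⟩
  rw [hfib]
  have : ∀ i ∈ cs j ∩ t, f (cs i) = f (cs j) := by
    intro i hi
    rw [Finset.mem_inter] at hi
    rw [hpart j i hi.1]
  rw [Finset.sum_congr rfl this, Finset.sum_const, nsmul_eq_mul]

lemma null_weight_sum {N : ℕ} (hN : 0 < N) (I0 : Finset (Fin N))
    (cs : Fin N → Finset (Fin N))
    (hmem : ∀ i, i ∈ cs i) (hpart : ∀ i j : Fin N, j ∈ cs i → cs j = cs i)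
    (pi0 : ℝ) (hpi0 : pi0 = (I0.card : ℝ) / (N : ℝ)) (hpi0lt : pi0 < 1)
    (prop : Finset (Fin N) → ℝ)
    (hprop : ∀ g, prop g = ((g ∩ I0).card : ℝ) / (g.card : ℝ))
    (hpm : ∀ i, 0 < prop (cs i) ∧ prop (cs i) < 1) :
    ∑ i ∈ I0, (1 - prop (cs i)) / (prop (cs i) * (1 - pi0)) = (N : ℝ) := by
  classical
  rw [fiber_sum I0 cs hmem hpart (fun g => (1 - prop g) / (prop g * (1 - pi0)))]
  have hterm : ∀ g ∈ Finset.univ.image cs,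
      ((g ∩ I0).card : ℝ) * ((1 - prop g) / (prop g * (1 - pi0)))
        = ((g.card : ℝ) - ((g ∩ I0).card : ℝ)) / (1 - pi0) := by
    intro g hg
    obtain ⟨j, _, rfl⟩ := Finset.mem_image.mp hg
    set g := cs j
    have hn : (0:ℝ) < (g.card : ℝ) := by
      have : 0 < g.card := Finset.card_pos.mpr ⟨j, hmem j⟩
      exact_mod_cast this
    have hp := hpm j
    have hpe := hprop g
    have ha : (0:ℝ) < ((g ∩ I0).card : ℝ) := by
      rcases Nat.eq_zero_or_pos (g ∩ I0).card with h | h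
      · exfalso
        rw [hpe, h] at hp
        norm_num at hp
      · exact_mod_cast h
    have hpi : (0:ℝ) < 1 - pi0 := by linarith
    rw [hpe]
    field_simp
  rw [Finset.sum_congr rfl hterm]
  have hsum1 : ∑ g ∈ Finset.univ.image cs, ((g.card : ℝ)) = (N : ℝ) := by
    have := fiber_sum (Finset.univ : Finset (Fin N)) cs hmem hpart (fun _ => (1:ℝ))
    simp only [Finset.inter_univ, mul_one, Finset.sum_const, nsmul_eq_mul,
      Finset.card_univ, Fintype.card_fin] at this
    simpa using this.symm
  have hsum2 : ∑ g ∈ Finset.univ.image cs, (((g ∩ I0).card : ℝ)) = (I0.card : ℝ) := by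
    have := fiber_sum I0 cs hmem hpart (fun _ => (1:ℝ))
    simp only [mul_one, Finset.sum_const, nsmul_eq_mul] at this
    simpa using this.symm
  rw [← Finset.sum_div, Finset.sum_sub_distrib, hsum1, hsum2]
  have hNne : (N:ℝ) ≠ 0 := by positivity
  have hI0 : (I0.card : ℝ) = pi0 * N := by rw [hpi0]; field_simp
  rw [hI0]
  have hpi : (1:ℝ) - pi0 ≠ 0 := by linarith
  field_simp


/-- Theorem 3: FDR control of the oracle S-Way GBH for PRDS p-values with uniform nulls. -/
theorem sWayGBH_FDR_control
    {Ω : Type*} [MeasurableSpace Ω] (μ : Measure Ω) [IsProbabilityMeasure μ]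
    {N S : ℕ} (hS : 2 ≤ S) (hN : 0 < N) (P : Ω → Fin N → ℝ) (hPmeas : Measurable P)
    (hPrange : ∀ ω i, P ω i ∈ Set.Icc (0 : ℝ) 1)
    (I0 : Finset (Fin N))
    (hUnif : UniformNulls μ P I0) (hPRDS : PRDSNulls μ P I0)
    (c : Fin S → Fin N → Finset (Fin N))
    (hmem : ∀ s i, i ∈ c s i)
    (hpart : ∀ s, ∀ i j : Fin N, j ∈ c s i → c s j = c s i)
    (pi0 : ℝ) (hpi0 : pi0 = (I0.card : ℝ) / (N : ℝ)) (hpi0mem : 0 < pi0 ∧ pi0 < 1)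
    (prop : Finset (Fin N) → ℝ)
    (hprop : ∀ g : Finset (Fin N), prop g = ((g ∩ I0).card : ℝ) / (g.card : ℝ))
    (hpropmem : ∀ s i, 0 < prop (c s i) ∧ prop (c s i) < 1)
    (w : Fin S → Fin N → ℝ)
    (hw : ∀ s i, w s i = prop (c s i) * (1 - pi0) / (1 - prop (c s i)))
    (W : Fin N → ℝ)
    (hW : ∀ i, 1 / W i = (1 / (S : ℝ)) * ∑ s, 1 / w s i)
    (α : ℝ) (hα : α ∈ Set.Ioo (0 : ℝ) 1) :
    FDR μ N α I0 (fun ω i => W i * P ω i) ≤ α := by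
  classical
  obtain ⟨hα0, hα1⟩ := hα
  have hN0 : (0:ℝ) < N := by exact_mod_cast hN
  have hS' : 0 < S := by omega
  have hS0 : (0:ℝ) < S := by exact_mod_cast hS'
  -- positivity of the weights
  have hw_pos : ∀ s i, 0 < w s i := by
    intro s i
    rw [hw]
    have h1 := (hpropmem s i).1
    have h2 := (hpropmem s i).2
    have h3 := hpi0mem.2
    exact div_pos (mul_pos h1 (by linarith)) (by linarith)
  have hWinv_pos : ∀ i, 0 < 1 / W i := by
    intro i
    rw [hW]
    refine mul_pos (by positivity) (Finset.sum_pos (fun s _ => ?_) ⟨⟨0, hS'⟩, Finset.mem_univ _⟩)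
    exact one_div_pos.mpr (hw_pos s i)
  have hWpos : ∀ i, 0 < W i := fun i => one_div_pos.mp (hWinv_pos i)
  set q : Fin N → ℝ := fun i => α / (N * W i) with hqdef
  have hq_pos : ∀ i, 0 < q i := fun i => div_pos hα0 (mul_pos hN0 (hWpos i))
  -- the sum of q over nulls is α
  have hinvw : ∀ s i, 1 / w s i = (1 - prop (c s i)) / (prop (c s i) * (1 - pi0)) := by
    intro s i; rw [hw, one_div_div]
  have hsum_s : ∀ s : Fin S, ∑ i ∈ I0, 1 / w s i = (N:ℝ) := by
    intro s
    rw [Finset.sum_congr rfl (fun i _ => hinvw s i)]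
    exact null_weight_sum hN I0 (c s) (hmem s) (hpart s) pi0 hpi0 hpi0mem.2 prop hprop
      (fun i => hpropmem s i)
  have hsumW : ∑ i ∈ I0, 1 / W i = (N:ℝ) := by
    rw [Finset.sum_congr rfl (fun i (_ : i ∈ I0) => hW i), ← Finset.mul_sum, Finset.sum_comm,
      Finset.sum_congr rfl (fun s (_ : s ∈ (Finset.univ : Finset (Fin S))) => hsum_s s),
      Finset.sum_const, Finset.card_univ, Fintype.card_fin, nsmul_eq_mul]
    field_simp
  have hsumq : ∑ i ∈ I0, q i = α := by
    have hq' : ∀ i, q i = (α/N) * (1/W i) := by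
      intro i
      rw [hqdef, mul_one_div, div_div]
    rw [Finset.sum_congr rfl (fun i _ => hq' i), ← Finset.mul_sum, hsumW]
    field_simp
  -- measurable machinery
  set Q : Ω → Fin N → ℝ := fun ω i => W i * P ω i with hQdef
  have hQmeas : Measurable Q :=
    measurable_pi_lambda _ (fun i => measurable_const.mul ((measurable_pi_apply i).comp hPmeas))
  set R : Ω → ℕ := fun ω => bhNumRejections N α (Q ω) with hRdef
  have hRmeas : Measurable R := (meas_bh N α).comp hQmeas
  set B : Fin N → ℕ → Set Ω := fun i k => {ω | P ω i ≤ (k:ℝ) * q i ∧ R ω = k} with hBdef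
  have hPimeas : ∀ i, Measurable (fun ω => P ω i) := fun i => (measurable_pi_apply i).comp hPmeas
  have hBmeas : ∀ i k, MeasurableSet (B i k) := fun i k =>
    (measurableSet_le (hPimeas i) measurable_const).inter (hRmeas (measurableSet_singleton k))
  have hRleN : ∀ ω, R ω ≤ N := fun ω => bh_le_N N α (Q ω)
  -- pointwise FDP identity
  have hFDP : ∀ ω, FDP N α I0 (Q ω) =
      ∑ i ∈ I0, ∑ k ∈ Finset.Icc 1 N, (B i k).indicator (fun _ => 1/(k:ℝ)) ω := by
    intro ω
    have hcard : (bhRejected N α (Q ω)).card = R ω := bh_card N α (le_of_lt hα0) (Q ω)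
    have hinter : bhRejected N α (Q ω) ∩ I0 = I0.filter (fun i => i ∈ bhRejected N α (Q ω)) := by
      ext i; simp only [Finset.mem_inter, Finset.mem_filter]; tauto
    rw [FDP, hinter, Finset.card_filter]
    push_cast
    rw [Finset.sum_div]
    apply Finset.sum_congr rfl
    intro i _
    rcases Nat.eq_zero_or_pos (R ω) with h0 | hpos
    · have hrejempty : bhRejected N α (Q ω) = ∅ :=
        Finset.card_eq_zero.mp (by rw [hcard, h0])
      rw [hrejempty]
      simp only [Finset.notMem_empty, if_false, zero_div]
      symm
      apply Finset.sum_eq_zero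
      intro k hk
      simp only [Finset.mem_Icc] at hk
      apply Set.indicator_of_notMem
      intro hmem'
      rw [hBdef] at hmem'
      have : R ω = k := hmem'.2
      omega
    · have hk0N : R ω ≤ N := hRleN ω
      have hmax : max ((bhRejected N α (Q ω)).card : ℝ) 1 = ((R ω : ℕ):ℝ) := by
        rw [hcard]; exact max_eq_left (by exact_mod_cast hpos)
      rw [hmax, Finset.sum_eq_single_of_mem (R ω) (Finset.mem_Icc.mpr ⟨hpos, hk0N⟩)]
      · have hmem_iff : i ∈ bhRejected N α (Q ω) ↔ P ω i ≤ ((R ω :ℕ):ℝ) * q i := by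
          simp only [bhRejected, Finset.mem_filter, Finset.mem_univ, true_and]
          have hWi := hWpos i
          have hQi : Q ω i = P ω i * W i := mul_comm _ _
          have hwiq : ((R ω:ℕ):ℝ) * q i = (((R ω:ℕ):ℝ)*α/N) / W i := by
            simp only [hqdef]
            field_simp
          rw [hQi, hwiq]
          exact le_div_iff₀ hWi |>.symm
        by_cases hrej : P ω i ≤ ((R ω:ℕ):ℝ) * q i
        · rw [if_pos (hmem_iff.mpr hrej), Set.indicator_of_mem (show ω ∈ B i (R ω) from ⟨hrej, rfl⟩)]
        · rw [if_neg (fun h => hrej (hmem_iff.mp h)),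
            Set.indicator_of_notMem (fun hmem' => hrej hmem'.1)]
          simp
      · intro k _ hne
        apply Set.indicator_of_notMem
        intro hmem'
        exact hne hmem'.2.symm
  -- FDR as a double sum
  have hFDR : FDR μ N α I0 Q =
      ∑ i ∈ I0, ∑ k ∈ Finset.Icc 1 N, (μ (B i k)).toReal * (1/(k:ℝ)) := by
    rw [FDR]
    rw [integral_congr_ae (Filter.Eventually.of_forall hFDP)]
    rw [integral_finset_sum _ (fun i _ => integrable_finset_sum _
      (fun k _ => (integrable_const _).indicator (hBmeas i k)))]
    apply Finset.sum_congr rfl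
    intro i _
    rw [integral_finset_sum _ (fun k _ => (integrable_const _).indicator (hBmeas i k))]
    apply Finset.sum_congr rfl
    intro k _
    rw [integral_indicator_const _ (hBmeas i k), smul_eq_mul]
    rfl
  -- per-index key bound
  have hBsub : ∀ i k, B i k ⊆ {ω | R ω = k} := fun i k ω h => h.2
  have hdisj : ∀ (i : Fin N) (k1 k2 : ℕ), k1 ≠ k2 → Disjoint (B i k1) (B i k2) := by
    intro i k1 k2 hne
    rw [Set.disjoint_left]
    intro ω h1 h2
    exact hne (h1.2.symm.trans h2.2)
  have hsum_le : ∀ (i : Fin N) (t : Finset ℕ) (T : Set Ω), MeasurableSet T →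
      (∀ k ∈ t, B i k ⊆ T) → ∑ k ∈ t, (μ (B i k)).toReal ≤ (μ T).toReal := by
    intro i t T hT hsub
    rw [← ENNReal.toReal_sum (fun k _ => measure_ne_top μ _)]
    apply ENNReal.toReal_mono (measure_ne_top μ T)
    rw [← measure_biUnion_finset (fun k1 _ k2 _ hne => hdisj i k1 k2 hne)
      (fun k _ => hBmeas i k)]
    exact measure_mono (Set.iUnion₂_subset hsub)
  have hRle_meas : ∀ k, MeasurableSet {ω | R ω ≤ k} := fun k => hRmeas measurableSet_Iic
  set F : Fin N → ℕ → ℝ → ℝ :=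
    fun i k x => (μ ({ω | P ω i ≤ x} ∩ {ω | R ω ≤ k})).toReal with hFdef
  have hF0 : ∀ i k x, 0 ≤ F i k x := fun i k x => ENNReal.toReal_nonneg
  have hratio : ∀ i ∈ I0, ∀ (k : ℕ), ∀ x y : ℝ, 0 < x → x ≤ y → y ≤ 1 →
      F i k x / x ≤ F i k y / y := by
    intro i hi k x y hx hxy hy1
    set φ : (Fin N → ℝ) → ℝ :=
      fun p => if bhNumRejections N α (fun j => W j * p j) ≤ k then (1:ℝ) else 0 with hφdef
    have hφmeas : Measurable φ := by
      apply Measurable.ite ?_ measurable_const measurable_const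
      exact measurableSet_le ((meas_bh N α).comp
        (measurable_pi_lambda _ (fun j => measurable_const.mul (measurable_pi_apply j))))
        measurable_const
    have hφbdd : ∃ C, ∀ p, |φ p| ≤ C := by
      refine ⟨1, fun p => ?_⟩
      simp only [hφdef]
      split_ifs <;> simp
    have hφmono : ∀ p r : Fin N → ℝ, (∀ j, p j ≤ r j) → φ p ≤ φ r := by
      intro p r hpr
      simp only [hφdef]
      have hanti : bhNumRejections N α (fun j => W j * r j) ≤
          bhNumRejections N α (fun j => W j * p j) := by
        apply bh_antitone
        intro j
        exact mul_le_mul_of_nonneg_left (hpr j) (le_of_lt (hWpos j))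
      split_ifs with h1 h2
      · exact le_refl _
      · exact absurd (le_trans hanti h1) h2
      · norm_num
      · exact le_refl _
    have hPR := hPRDS i hi φ hφmeas hφbdd hφmono x y hx hxy hy1
    have hφP : ∀ ω, φ (P ω) = ({ω' | R ω' ≤ k}).indicator (fun _ => (1:ℝ)) ω := by
      intro ω
      rw [hφdef, Set.indicator_apply]
      rfl
    have hint : ∀ z : ℝ, (∫ ω in {ω | P ω i ≤ z}, φ (P ω) ∂μ)
        = (μ ({ω | P ω i ≤ z} ∩ {ω' | R ω' ≤ k})).toReal := by
      intro z
      rw [setIntegral_congr_fun (measurableSet_le (hPimeas i) measurable_const)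
        (fun ω _ => hφP ω)]
      rw [MeasureTheory.setIntegral_indicator (hRle_meas k), setIntegral_const, smul_eq_mul,
        mul_one]
      rfl
    have hden : ∀ z : ℝ, 0 ≤ z → z ≤ 1 → (μ {ω | P ω i ≤ z}).toReal = z := by
      intro z hz0 hz1
      rw [hUnif i hi z ⟨hz0, hz1⟩, ENNReal.toReal_ofReal hz0]
    rw [hint x, hint y, hden x (le_of_lt hx) (le_trans hxy hy1), hden y
      (le_trans (le_of_lt hx) hxy) hy1] at hPR
    exact hPR
  have hFrec : ∀ (i : Fin N) (k : ℕ), 1 ≤ k → ∀ x : ℝ,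
      (μ ({ω | P ω i ≤ x} ∩ {ω | R ω ≤ k})).toReal
        = (μ ({ω | P ω i ≤ x} ∩ {ω | R ω ≤ k - 1})).toReal
          + (μ ({ω | P ω i ≤ x} ∩ {ω | R ω = k})).toReal := by
    intro i k hk x
    have hsplit : {ω | P ω i ≤ x} ∩ {ω | R ω ≤ k}
        = ({ω | P ω i ≤ x} ∩ {ω | R ω ≤ k - 1}) ∪ ({ω | P ω i ≤ x} ∩ {ω | R ω = k}) := by
      ext ω
      simp only [Set.mem_inter_iff, Set.mem_union, Set.mem_setOf_eq]
      constructor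
      · rintro ⟨h1, h2⟩
        rcases Nat.lt_or_ge (R ω) k with h | h
        · exact Or.inl ⟨h1, by omega⟩
        · exact Or.inr ⟨h1, by omega⟩
      · rintro (⟨h1, h2⟩ | ⟨h1, h2⟩)
        · exact ⟨h1, by omega⟩
        · exact ⟨h1, by omega⟩
    have hdisj2 : Disjoint ({ω | P ω i ≤ x} ∩ {ω | R ω ≤ k - 1})
        ({ω | P ω i ≤ x} ∩ {ω | R ω = k}) := by
      rw [Set.disjoint_left]
      rintro ω ⟨_, h1⟩ ⟨_, h2⟩
      rw [Set.mem_setOf_eq] at h1 h2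
      omega
    rw [hsplit, measure_union hdisj2
      ((measurableSet_le (hPimeas i) measurable_const).inter
        (hRmeas (measurableSet_singleton k))),
      ENNReal.toReal_add (measure_ne_top μ _) (measure_ne_top μ _)]
  have key : ∀ i ∈ I0, ∑ k ∈ Finset.Icc 1 N, (μ (B i k)).toReal * (1/(k:ℝ)) ≤ q i := by
    intro i hi
    have hqi := hq_pos i
    by_cases hq1 : 1 ≤ q i
    · calc ∑ k ∈ Finset.Icc 1 N, (μ (B i k)).toReal * (1/(k:ℝ))
          ≤ ∑ k ∈ Finset.Icc 1 N, (μ (B i k)).toReal := by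
            apply Finset.sum_le_sum
            intro k hk
            rw [Finset.mem_Icc] at hk
            have hk1 : (1:ℝ) ≤ (k:ℝ) := by exact_mod_cast hk.1
            have : (1:ℝ)/(k:ℝ) ≤ 1 := by
              rw [div_le_one (by linarith)]; exact hk1
            nlinarith [ENNReal.toReal_nonneg (a := μ (B i k))]
        _ ≤ (μ (Set.univ : Set Ω)).toReal :=
            hsum_le i _ _ MeasurableSet.univ (fun k _ => Set.subset_univ _)
        _ = 1 := by simp
        _ ≤ q i := hq1
    · push_neg at hq1
      set m := min N (Nat.floor (1/q i)) with hmdef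
      have hfl1 : 1 ≤ Nat.floor (1/q i) := by
        apply Nat.le_floor
        rw [le_div_iff₀ hqi]
        push_cast
        linarith
      have hm1 : 1 ≤ m := le_min hN hfl1
      have hmN : m ≤ N := min_le_left _ _
      have hmq1 : (m:ℝ) * q i ≤ 1 := by
        have h1 : (m:ℝ) ≤ (Nat.floor (1/q i) : ℝ) := by
          exact_mod_cast min_le_right N _
        have h2 : ((Nat.floor (1/q i) : ℕ):ℝ) ≤ 1/q i := Nat.floor_le (by positivity)
        rw [← le_div_iff₀ hqi]
        linarith
      have hm0 : (0:ℝ) < (m:ℝ) := by exact_mod_cast hm1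
      have htail : ∀ k : ℕ, m < k → k ≤ N → (1:ℝ)/(k:ℝ) ≤ q i := by
        intro k hk hkN
        have hmltN : m < N := lt_of_lt_of_le hk hkN
        have hmfl : m = Nat.floor (1/q i) := by
          rw [hmdef]
          apply min_eq_right
          by_contra h
          push_neg at h
          have : m = N := by rw [hmdef]; omega
          omega
        have h2 : 1/q i < ((k:ℕ):ℝ) := by
          calc 1/q i < ((Nat.floor (1/q i) : ℕ):ℝ) + 1 := Nat.lt_floor_add_one _
            _ ≤ (k:ℝ) := by
                have : Nat.floor (1/q i) + 1 ≤ k := by omega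
                exact_mod_cast this
        have hkpos : (0:ℝ) < (k:ℝ) := by exact_mod_cast (by omega : 0 < k)
        rw [div_le_iff₀ hkpos]
        rw [div_lt_iff₀ hqi] at h2
        nlinarith
      -- split the sum
      have hsplit : Finset.Icc 1 N = Finset.Icc 1 m ∪ Finset.Ioc m N := by
        ext k
        simp only [Finset.mem_Icc, Finset.mem_union, Finset.mem_Ioc]
        omega
      have hdisjt : Disjoint (Finset.Icc 1 m) (Finset.Ioc m N) := by
        rw [Finset.disjoint_left]
        intro k hk1 hk2
        rw [Finset.mem_Icc] at hk1
        rw [Finset.mem_Ioc] at hk2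
        omega
      rw [hsplit, Finset.sum_union hdisjt]
      -- head
      have hBeq : ∀ k : ℕ, 1 ≤ k →
          (μ (B i k)).toReal = F i k ((k:ℝ) * q i) - F i (k-1) ((k:ℝ) * q i) := by
        intro k hk
        have := hFrec i k hk ((k:ℝ) * q i)
        simp only [hFdef]
        have hBset : B i k = {ω | P ω i ≤ (k:ℝ) * q i} ∩ {ω | R ω = k} := by
          ext ω; simp only [hBdef, Set.mem_inter_iff, Set.mem_setOf_eq]
        rw [hBset]
        linarith
      have hhead : ∑ k ∈ Finset.Icc 1 m, (μ (B i k)).toReal * (1/(k:ℝ))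
          ≤ q i * (μ {ω | R ω ≤ m}).toReal := by
        have h1 : ∑ k ∈ Finset.Icc 1 m, (μ (B i k)).toReal * (1/(k:ℝ))
            = ∑ k ∈ Finset.Icc 1 m, (1/(k:ℝ)) * (F i k ((k:ℝ) * q i)
              - F i (k-1) ((k:ℝ) * q i)) := by
          apply Finset.sum_congr rfl
          intro k hk
          rw [Finset.mem_Icc] at hk
          rw [hBeq k hk.1, mul_comm]
        rw [h1]
        have h2 := abel_bound (F i) (q i) hqi (hF0 i)
          (fun k x y hx hxy hy1 => hratio i hi k x y hx hxy hy1) m hm1 hmq1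
        refine le_trans h2 ?_
        -- (1/m) F i m (m q) ≤ q * μ{R ≤ m}
        have h3 := hratio i hi m ((m:ℝ) * q i) 1 (by positivity) hmq1 (le_refl 1)
        have hF1 : F i m 1 = (μ {ω | R ω ≤ m}).toReal := by
          simp only [hFdef]
          congr 1
          have huniv : {ω : Ω | P ω i ≤ (1:ℝ)} = Set.univ :=
            Set.eq_univ_of_forall (fun ω => (hPrange ω i).2)
          rw [huniv, Set.univ_inter]
        rw [hF1, div_one] at h3
        have h4 : (1/(m:ℝ)) * F i m ((m:ℝ) * q i)
            = q i * (F i m ((m:ℝ) * q i) / ((m:ℝ) * q i)) := by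
          field_simp
        rw [h4]
        exact mul_le_mul_of_nonneg_left h3 (le_of_lt hqi)
      -- tail
      have htail2 : ∑ k ∈ Finset.Ioc m N, (μ (B i k)).toReal * (1/(k:ℝ))
          ≤ q i * (μ ({ω | R ω ≤ m}ᶜ)).toReal := by
        calc ∑ k ∈ Finset.Ioc m N, (μ (B i k)).toReal * (1/(k:ℝ))
            ≤ ∑ k ∈ Finset.Ioc m N, (μ (B i k)).toReal * q i := by
              apply Finset.sum_le_sum
              intro k hk
              rw [Finset.mem_Ioc] at hk
              exact mul_le_mul_of_nonneg_left (htail k hk.1 hk.2) ENNReal.toReal_nonneg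
          _ = q i * ∑ k ∈ Finset.Ioc m N, (μ (B i k)).toReal := by
              rw [Finset.mul_sum]
              apply Finset.sum_congr rfl
              intro k _
              ring
          _ ≤ q i * (μ ({ω | R ω ≤ m}ᶜ)).toReal := by
              apply mul_le_mul_of_nonneg_left ?_ (le_of_lt hqi)
              apply hsum_le i _ _ (hRle_meas m).compl
              intro k hk ω hω
              rw [Finset.mem_Ioc] at hk
              have : R ω = k := hω.2
              simp only [Set.mem_compl_iff, Set.mem_setOf_eq]
              omega
      have hcompl : (μ {ω | R ω ≤ m}).toReal + (μ ({ω | R ω ≤ m}ᶜ)).toReal = 1 := by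
        rw [← ENNReal.toReal_add (measure_ne_top μ _) (measure_ne_top μ _),
          measure_add_measure_compl (hRle_meas m)]
        simp
      calc ∑ k ∈ Finset.Icc 1 m, (μ (B i k)).toReal * (1/(k:ℝ))
            + ∑ k ∈ Finset.Ioc m N, (μ (B i k)).toReal * (1/(k:ℝ))
          ≤ q i * (μ {ω | R ω ≤ m}).toReal + q i * (μ ({ω | R ω ≤ m}ᶜ)).toReal :=
            add_le_add hhead htail2
        _ = q i * ((μ {ω | R ω ≤ m}).toReal + (μ ({ω | R ω ≤ m}ᶜ)).toReal) := by ring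
        _ = q i := by rw [hcompl, mul_one]
  calc FDR μ N α I0 Q = _ := hFDR
    _ ≤ ∑ i ∈ I0, q i := Finset.sum_le_sum key
    _ = α := hsumq
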